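/- Let P be a finite poset and let I, J, K be pairwise distinct poset ideals of P. Then conv{ρ(I), ρ(J), ρ(K)} is a triangular 2-face of the order polytope O(P) if and only if the three ideals can be labeled so that I ⊆ J ⊆ K and each of J ∖ I, K ∖ J, and K ∖ I is connected in P. -/

import Mathlib

open Finset
open scoped Classical

variable (P : Type*) [Fintype P] [PartialOrder P]

/-- The comparability graph of a poset. -/
def compGraph : SimpleGraph P where
  Adj x y := x ≠ y ∧ (x ≤ y ∨ y ≤ x)
  symm := ⟨fun _ _ h => ⟨h.1.symm, h.2.symm⟩⟩
  loopless := ⟨fun _ h => h.1 rfl⟩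

/-- A subset `W` of `P` is connected in `P` if the subgraph of the comparability
graph induced on `W` is connected (this includes `W` being nonempty). -/
def ConnIn (W : Set P) : Prop :=
  (SimpleGraph.induce W (compGraph P)).Connected

/-- A poset ideal (down-set). -/
def IsIdealF (I : Finset P) : Prop :=
  ∀ ⦃x y : P⦄, x ∈ I → y ≤ x → y ∈ I

/-- An antichain of the poset. -/
def IsAntichainF (A : Finset P) : Prop :=
  IsAntichain (· ≤ ·) (↑A : Set P)

/-- The 0/1 indicator vector of a subset of `P`. -/
noncomputable def rho (W : Finset P) : P → ℝ :=
  fun x => if x ∈ W then 1 else 0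

/-- The order polytope of `P`. -/
def orderPolytope : Set (P → ℝ) :=
  {f | (∀ x, 0 ≤ f x ∧ f x ≤ 1) ∧ ∀ ⦃x y : P⦄, x ≤ y → f y ≤ f x}

/-- The chain polytope of `P`. -/
def chainPolytope : Set (P → ℝ) :=
  {f | (∀ x, 0 ≤ f x) ∧ ∀ s : Finset P, IsChain (· ≤ ·) (↑s : Set P) → ∑ x ∈ s, f x ≤ 1}

/-- `conv {u, v}` is an edge (1-dimensional exposed face) of the polytope `S`. -/
def IsEdgeOf (S : Set (P → ℝ)) (u v : P → ℝ) : Prop :=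
  u ≠ v ∧ IsExposed ℝ S (convexHull ℝ {u, v})

/-- `conv {u, v, w}` is a triangular 2-face of the polytope `S`. -/
def IsTriFaceOf (S : Set (P → ℝ)) (u v w : P → ℝ) : Prop :=
  u ≠ v ∧ u ≠ w ∧ v ≠ w ∧ IsExposed ℝ S (convexHull ℝ {u, v, w})

/-- The set of maximal elements of a subset of `P`. -/
noncomputable def maxSet (W : Finset P) : Finset P :=
  W.filter (fun x => ∀ y ∈ W, ¬ x < y)

/-- The set of minimal elements of a subset of `P`. -/
noncomputable def minSet (W : Finset P) : Finset P :=
  W.filter (fun x => ∀ y ∈ W, ¬ y < x)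

/-- The poset ideal generated by a subset of `P`. -/
noncomputable def genIdeal (A : Finset P) : Finset P :=
  univ.filter (fun x => ∃ a ∈ A, x ≤ a)

/-- The pair `{I, J}` belongs to `E*_O(P)`. -/
noncomputable def EstarO (I J : Finset P) : Prop :=
  IsIdealF P I ∧ IsIdealF P J ∧ I ≠ J ∧
    IsEdgeOf P (orderPolytope P) (rho P I) (rho P J) ∧
    ¬ IsEdgeOf P (chainPolytope P) (rho P (maxSet P I)) (rho P (maxSet P J))

/-- The pair `{A, B}` belongs to `E*_C(P)`. -/
noncomputable def EstarC (A B : Finset P) : Prop :=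
  IsAntichainF P A ∧ IsAntichainF P B ∧ A ≠ B ∧
    IsEdgeOf P (chainPolytope P) (rho P A) (rho P B) ∧
    ¬ IsEdgeOf P (orderPolytope P) (rho P (genIdeal P A)) (rho P (genIdeal P B))

/-- `Δ_O(P)`: unordered triples of pairwise distinct poset ideals spanning a
triangular 2-face of the order polytope. -/
def DeltaO : Set (Finset (Finset P)) :=
  {T | ∃ I J K : Finset P, T = {I, J, K} ∧ I ≠ J ∧ I ≠ K ∧ J ≠ K ∧
    IsIdealF P I ∧ IsIdealF P J ∧ IsIdealF P K ∧
    IsTriFaceOf P (orderPolytope P) (rho P I) (rho P J) (rho P K)}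

/-- `Δ_C(P)`: unordered triples of pairwise distinct antichains spanning a
triangular 2-face of the chain polytope. -/
def DeltaC : Set (Finset (Finset P)) :=
  {T | ∃ A B C : Finset P, T = {A, B, C} ∧ A ≠ B ∧ A ≠ C ∧ B ≠ C ∧
    IsAntichainF P A ∧ IsAntichainF P B ∧ IsAntichainF P C ∧
    IsTriFaceOf P (chainPolytope P) (rho P A) (rho P B) (rho P C)}

/-- `Δ*_O(P)`: triples in `Δ_O(P)` at least one of whose pairs lies in `E*_O(P)`. -/
def DeltaStarO : Set (Finset (Finset P)) :=
  {T | T ∈ DeltaO P ∧ ∃ I ∈ T, ∃ J ∈ T, I ≠ J ∧ EstarO P I J}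

/-- `Δ*_C(P)`: triples in `Δ_C(P)` at least one of whose pairs lies in `E*_C(P)`. -/
def DeltaStarC : Set (Finset (Finset P)) :=
  {T | T ∈ DeltaC P ∧ ∃ A ∈ T, ∃ B ∈ T, A ≠ B ∧ EstarC P A B}

/-- `r` is a rank function exhibiting `P` as a maximal ranked poset of rank `n`:
`r` is surjective onto `{0, …, n}` and `x < y ↔ r x < r y`. -/
def IsMaxRanked (r : P → ℕ) (n : ℕ) : Prop :=
  (∀ x, r x ≤ n) ∧ (∀ i, i ≤ n → ∃ x, r x = i) ∧ (∀ x y : P, x < y ↔ r x < r y)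

/-- The rank level `P_i`. -/
noncomputable def level (r : P → ℕ) (i : ℕ) : Finset P :=
  univ.filter (fun x => r x = i)

/-- `P` contains an `X`-poset as a subposet. -/
def ContainsX : Prop :=
  ∃ a b c d e : P,
    a ≠ b ∧ a ≠ c ∧ a ≠ d ∧ a ≠ e ∧ b ≠ c ∧ b ≠ d ∧ b ≠ e ∧ c ≠ d ∧ c ≠ e ∧ d ≠ e ∧
    a < c ∧ b < c ∧ c < d ∧ c < e ∧ ¬ a ≤ b ∧ ¬ b ≤ a ∧ ¬ d ≤ e ∧ ¬ e ≤ d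

section AuxLemmas
set_option linter.unusedSectionVars false
variable {P}

lemma rho_inj {I J : Finset P} (h : rho P I = rho P J) : I = J := by
  ext x
  have := congrFun h x
  by_cases hI : x ∈ I <;> by_cases hJ : x ∈ J <;> simp [rho, hI, hJ] at this ⊢

lemma rho_mem_orderPolytope {I : Finset P} (hI : IsIdealF P I) :
    rho P I ∈ orderPolytope P := by
  constructor
  · intro x; by_cases h : x ∈ I <;> simp [rho, h]
  · intro x y hxy
    by_cases hy : y ∈ I
    · have hx : x ∈ I := hI hy hxy
      simp [rho, hx, hy]
    · by_cases hx : x ∈ I <;> simp [rho, hx, hy]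

lemma convex_orderPolytope : Convex ℝ (orderPolytope P) := by
  intro f hf g hg a b ha hb hab
  refine ⟨fun x => ⟨?_, ?_⟩, fun x y hxy => ?_⟩
  · have h1 := (hf.1 x).1; have h2 := (hg.1 x).1
    have : a * f x + b * g x ≥ 0 := by nlinarith
    simpa using this
  · have h1 := (hf.1 x).2; have h2 := (hg.1 x).2
    have h3 := (hf.1 x).1; have h4 := (hg.1 x).1
    have : a * f x + b * g x ≤ 1 := by nlinarith
    simpa using this
  · have := hf.2 hxy; have := hg.2 hxy
    simp only [Pi.add_apply, Pi.smul_apply, smul_eq_mul]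
    nlinarith

lemma zeroOne_cases {W : Finset P} (x : P) : rho P W x = 0 ∨ rho P W x = 1 := by
  by_cases h : x ∈ W <;> simp [rho, h]


lemma zeroOne_comb {p q r f : P → ℝ}
    (hp : ∀ x, p x = 0 ∨ p x = 1) (hq : ∀ x, q x = 0 ∨ q x = 1)
    (hr : ∀ x, r x = 0 ∨ r x = 1) (hf : ∀ x, f x = 0 ∨ f x = 1)
    {t s u : ℝ} (ht : 0 < t) (hs : 0 ≤ s) (hu : 0 ≤ u) (htsu : t + s + u = 1)
    (hrep : ∀ x, f x = t * p x + s * q x + u * r x) : f = p := by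
  funext x
  have h := hrep x
  rcases hf x with hfx | hfx <;> rcases hp x with hpx | hpx <;>
    rcases hq x with hqx | hqx <;> rcases hr x with hrx | hrx <;>
    rw [hfx, hpx, hqx, hrx] at h <;> rw [hfx, hpx] <;> nlinarith [h]

lemma zeroOne_convexHull_triple {u v w f : P → ℝ}
    (hu : ∀ x, u x = 0 ∨ u x = 1) (hv : ∀ x, v x = 0 ∨ v x = 1)
    (hw : ∀ x, w x = 0 ∨ w x = 1) (hf : ∀ x, f x = 0 ∨ f x = 1)
    (h : f ∈ convexHull ℝ ({u, v, w} : Set (P → ℝ))) : f = u ∨ f = v ∨ f = w := by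
  classical
  rw [show ({u, v, w} : Set (P → ℝ)) = insert u {v, w} from rfl,
    convexHull_insert ⟨v, by simp⟩, mem_convexJoin] at h
  obtain ⟨x₀, hx₀, y, hy, hseg⟩ := h
  rw [Set.mem_singleton_iff] at hx₀
  rw [hx₀] at hseg
  rw [convexHull_pair] at hy
  obtain ⟨b', c', hb', hc', hbc', rfl⟩ := hy
  obtain ⟨a, a', ha, ha', haa', hrep⟩ := hseg
  have hrep' : ∀ z, f z = a * u z + (a' * b') * v z + (a' * c') * w z := by
    intro z
    have := congrFun hrep z
    simp only [Pi.add_apply, Pi.smul_apply, smul_eq_mul] at this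
    linarith [this]
  rcases lt_or_eq_of_le ha with ha0 | ha0
  · exact Or.inl (zeroOne_comb hu hv hw hf (t := a) (s := a' * b') (u := a' * c')
      ha0 (by positivity) (by positivity) (by nlinarith) hrep')
  · have ha1 : a' = 1 := by linarith
    rcases lt_or_eq_of_le hb' with hb0 | hb0
    · refine Or.inr (Or.inl (zeroOne_comb hv hu hw hf (t := a' * b') (s := a)
        (u := a' * c') (by nlinarith) ha (by positivity) (by nlinarith) fun z => ?_))
      have := hrep' z; linarith [this]
    · have hc1 : c' = 1 := by linarith
      refine Or.inr (Or.inr (zeroOne_comb hw hu hv hf (t := a' * c') (s := a)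
        (u := a' * b') (by nlinarith) ha (by positivity) (by nlinarith) fun z => ?_))
      have := hrep' z; linarith [this]

lemma walk_const {W : Set P} (f : P → ℝ)
    (hf : ∀ x ∈ W, ∀ y ∈ W, (compGraph P).Adj x y → f x = f y) :
    ∀ {a b : W} (_ : (SimpleGraph.induce W (compGraph P)).Walk a b), f a = f b := by
  intro a b p
  induction p with
  | nil => rfl
  | @cons c d e h p ih =>
      exact (hf c c.2 d d.2 h).trans ih

lemma const_of_connIn {W : Set P} (h : ConnIn P W) (f : P → ℝ)
    (hf : ∀ x ∈ W, ∀ y ∈ W, (compGraph P).Adj x y → f x = f y) :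
    ∀ x ∈ W, ∀ y ∈ W, f x = f y := by
  intro x hx y hy
  obtain ⟨p⟩ := h.preconnected ⟨x, hx⟩ ⟨y, hy⟩
  exact walk_const f hf p

/-- Splitting a disconnected (nonempty) subset into two parts with no comparabilities between. -/
lemma split_of_not_connIn {W : Finset P} (hW : W.Nonempty) (hnc : ¬ ConnIn P (↑W : Set P)) :
    ∃ A B : Finset P, A ∪ B = W ∧ Disjoint A B ∧ A.Nonempty ∧ B.Nonempty ∧
      ∀ x ∈ A, ∀ y ∈ B, ¬ (x ≠ y ∧ (x ≤ y ∨ y ≤ x)) := by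
  classical
  obtain ⟨u, hu⟩ := hW
  have huW : (u : P) ∈ (↑W : Set P) := by exact_mod_cast hu
  set G := SimpleGraph.induce (↑W : Set P) (compGraph P) with hG
  set A : Finset P := W.filter (fun x => ∃ hx : x ∈ W, G.Reachable ⟨u, huW⟩ ⟨x, by exact_mod_cast hx⟩) with hA
  set B : Finset P := W \ A with hB
  have hAW : A ⊆ W := Finset.filter_subset _ _
  have huA : u ∈ A := by
    rw [hA, Finset.mem_filter]
    exact ⟨hu, hu, SimpleGraph.Reachable.refl _⟩
  have hreach : ∀ x (hx : x ∈ W), G.Reachable ⟨u, huW⟩ ⟨x, by exact_mod_cast hx⟩ → x ∈ A := by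
    intro x hx hr
    rw [hA, Finset.mem_filter]
    exact ⟨hx, hx, hr⟩
  have hBne : B.Nonempty := by
    by_contra hBe
    rw [Finset.not_nonempty_iff_eq_empty, hB, Finset.sdiff_eq_empty_iff_subset] at hBe
    apply hnc
    show G.Connected
    rw [SimpleGraph.connected_iff]
    refine ⟨?_, ⟨⟨u, huW⟩⟩⟩
    intro a b
    have haA : (a : P) ∈ A := hBe (by exact_mod_cast a.2)
    have hbA : (b : P) ∈ A := hBe (by exact_mod_cast b.2)
    rw [hA, Finset.mem_filter] at haA hbA
    obtain ⟨_, _, hra⟩ := haA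
    obtain ⟨_, _, hrb⟩ := hbA
    exact hra.symm.trans hrb
  refine ⟨A, B, ?_, Finset.disjoint_sdiff, ⟨u, huA⟩, hBne, ?_⟩
  · rw [hB]; exact Finset.union_sdiff_of_subset hAW
  · intro x hx y hy hadj
    have hxW : x ∈ W := hAW hx
    have hyW : y ∈ W := (Finset.sdiff_subset) hy
    have : G.Adj ⟨x, by exact_mod_cast hxW⟩ ⟨y, by exact_mod_cast hyW⟩ := by
      exact hadj
    have hxA := hx
    rw [hA, Finset.mem_filter] at hxA
    obtain ⟨_, _, hrx⟩ := hxA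
    have : y ∈ A := hreach y hyW (hrx.trans this.reachable)
    rw [hB, Finset.mem_sdiff] at hy
    exact hy.2 this

lemma sandwich {X Y : Finset P} (hX : IsIdealF P X) (hY : IsIdealF P Y)
    (hXY : X ⊆ Y) (hne : X ≠ Y) (hnc : ¬ ConnIn P (↑(Y \ X) : Set P)) :
    ∃ M N : Finset P, IsIdealF P M ∧ IsIdealF P N ∧
      rho P M + rho P N = rho P X + rho P Y ∧
      X ⊂ M ∧ M ⊂ Y ∧ X ⊂ N ∧ N ⊂ Y ∧ M ≠ N := by
  classical
  have hWne : (Y \ X).Nonempty := by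
    rw [Finset.sdiff_nonempty]
    intro h
    exact hne (Finset.Subset.antisymm hXY h)
  obtain ⟨A, B, hAB, hdisj, hAne, hBne, hsep⟩ := split_of_not_connIn hWne hnc
  have hAsub : A ⊆ Y \ X := hAB ▸ Finset.subset_union_left
  have hBsub : B ⊆ Y \ X := hAB ▸ Finset.subset_union_right
  -- X ∪ A is an ideal (similarly X ∪ B)
  have hideal : ∀ C D : Finset P, C ∪ D = Y \ X →
      (∀ x ∈ C, ∀ y ∈ D, ¬ (x ≠ y ∧ (x ≤ y ∨ y ≤ x))) → IsIdealF P (X ∪ C) := by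
    intro C D hCD hsepCD x y hx hyx
    rw [Finset.mem_union] at hx ⊢
    rcases hx with hx | hx
    · exact Or.inl (hX hx hyx)
    · have hxW : x ∈ Y \ X := hCD ▸ Finset.mem_union_left _ hx
      have hxY : x ∈ Y := (Finset.mem_sdiff.mp hxW).1
      have hyY : y ∈ Y := hY hxY hyx
      by_cases hyX : y ∈ X
      · exact Or.inl hyX
      · have hyW : y ∈ Y \ X := Finset.mem_sdiff.mpr ⟨hyY, hyX⟩
        by_cases hxy : y = x
        · exact Or.inr (hxy ▸ hx)
        · have hyCD : y ∈ C ∪ D := hCD.symm ▸ hyW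
          rw [Finset.mem_union] at hyCD
          rcases hyCD with hyC | hyD
          · exact Or.inr hyC
          · exact absurd ⟨fun h => hxy h.symm, Or.inr hyx⟩ (hsepCD x hx y hyD)
  have hsep' : ∀ x ∈ B, ∀ y ∈ A, ¬ (x ≠ y ∧ (x ≤ y ∨ y ≤ x)) := by
    intro x hx y hy ⟨h1, h2⟩
    exact hsep y hy x hx ⟨h1.symm, h2.symm⟩
  have hMideal := hideal A B hAB hsep
  have hNideal := hideal B A (by rw [Finset.union_comm]; exact hAB) hsep'
  obtain ⟨a, ha⟩ := hAne
  obtain ⟨b, hb⟩ := hBne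
  have haW := hAsub ha; have hbW := hBsub hb
  rw [Finset.mem_sdiff] at haW hbW
  have haB : a ∉ B := Finset.disjoint_left.mp hdisj ha
  have hbA : b ∉ A := Finset.disjoint_right.mp hdisj hb
  refine ⟨X ∪ A, X ∪ B, hMideal, hNideal, ?_, ?_, ?_, ?_, ?_, ?_⟩
  · funext z
    simp only [Pi.add_apply, rho]
    by_cases hzX : z ∈ X
    · have hzY : z ∈ Y := hXY hzX
      simp [hzX, hzY]
    · by_cases hzA : z ∈ A
      · have hzY : z ∈ Y := (Finset.mem_sdiff.mp (hAsub hzA)).1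
        have hzB : z ∉ B := Finset.disjoint_left.mp hdisj hzA
        simp [hzX, hzA, hzB, hzY]
      · by_cases hzB : z ∈ B
        · have hzY : z ∈ Y := (Finset.mem_sdiff.mp (hBsub hzB)).1
          simp [hzX, hzA, hzB, hzY]
        · have hzY : z ∉ Y := by
            intro hzY
            have : z ∈ A ∪ B := hAB.symm ▸ Finset.mem_sdiff.mpr ⟨hzY, hzX⟩
            rw [Finset.mem_union] at this; tauto
          simp [hzX, hzA, hzB, hzY]
  · exact Finset.ssubset_iff_of_subset Finset.subset_union_left |>.mpr
      ⟨a, Finset.mem_union_right _ ha, haW.2⟩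
  · constructor
    · rw [Finset.union_subset_iff]; exact ⟨hXY, fun z hz => (Finset.mem_sdiff.mp (hAsub hz)).1⟩
    · intro hcon
      have := hcon hbW.1
      rw [Finset.mem_union] at this
      tauto
  · exact Finset.ssubset_iff_of_subset Finset.subset_union_left |>.mpr
      ⟨b, Finset.mem_union_right _ hb, hbW.2⟩
  · constructor
    · rw [Finset.union_subset_iff]; exact ⟨hXY, fun z hz => (Finset.mem_sdiff.mp (hBsub hz)).1⟩
    · intro hcon
      have := hcon haW.1
      rw [Finset.mem_union] at this
      tauto
  · intro hMN
    have : a ∈ X ∪ B := hMN ▸ Finset.mem_union_right _ ha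
    rw [Finset.mem_union] at this
    tauto

lemma rho_union_inter (U V : Finset P) :
    rho P (U ∪ V) + rho P (U ∩ V) = rho P U + rho P V := by
  classical
  funext z
  simp only [Pi.add_apply, rho, Finset.mem_union, Finset.mem_inter]
  by_cases hU : z ∈ U <;> by_cases hV : z ∈ V <;> simp [hU, hV]

lemma union_ideal {U V : Finset P} (hU : IsIdealF P U) (hV : IsIdealF P V) :
    IsIdealF P (U ∪ V) := by
  intro x y hx hyx
  rw [Finset.mem_union] at hx ⊢
  rcases hx with hx | hx
  · exact Or.inl (hU hx hyx)
  · exact Or.inr (hV hx hyx)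

lemma inter_ideal {U V : Finset P} (hU : IsIdealF P U) (hV : IsIdealF P V) :
    IsIdealF P (U ∩ V) := by
  intro x y hx hyx
  rw [Finset.mem_inter] at hx ⊢
  exact ⟨hU hx.1 hyx, hV hx.2 hyx⟩

lemma forward_dir {I J K : Finset P} (hI : IsIdealF P I) (hJ : IsIdealF P J)
    (hK : IsIdealF P K) (hIJ : I ≠ J) (hIK : I ≠ K) (hJK : J ≠ K)
    (h : IsTriFaceOf P (orderPolytope P) (rho P I) (rho P J) (rho P K)) :
    ∃ I' J' K' : Finset P, ({I', J', K'} : Set (Finset P)) = {I, J, K} ∧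
      I' ⊆ J' ∧ J' ⊆ K' ∧
      ConnIn P (↑(J' \ I')) ∧ ConnIn P (↑(K' \ J')) ∧ ConnIn P (↑(K' \ I')) := by
  classical
  obtain ⟨-, -, -, hexp⟩ := h
  set F : Set (P → ℝ) := convexHull ℝ {rho P I, rho P J, rho P K} with hF
  have hIF : rho P I ∈ F := subset_convexHull _ _ (by simp)
  have hJF : rho P J ∈ F := subset_convexHull _ _ (by simp)
  have hKF : rho P K ∈ F := subset_convexHull _ _ (by simp)
  obtain ⟨l, hl⟩ := hexp ⟨_, hIF⟩
  -- the workhorse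
  have work : ∀ U V M N : Finset P, (U = I ∨ U = J ∨ U = K) → (V = I ∨ V = J ∨ V = K) →
      IsIdealF P M → IsIdealF P N → rho P M + rho P N = rho P U + rho P V →
      (M = I ∨ M = J ∨ M = K) ∧ (N = I ∨ N = J ∨ N = K) := by
    intro U V M N hU hV hM hN hsum
    have hUF : rho P U ∈ F := by rcases hU with rfl | rfl | rfl <;> assumption
    have hVF : rho P V ∈ F := by rcases hV with rfl | rfl | rfl <;> assumption
    rw [hl] at hUF hVF
    have hMS : rho P M ∈ orderPolytope P := rho_mem_orderPolytope hM
    have hNS : rho P N ∈ orderPolytope P := rho_mem_orderPolytope hN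
    have hUV : l (rho P U) = l (rho P V) :=
      le_antisymm (hVF.2 _ hUF.1) (hUF.2 _ hVF.1)
    have hsum' : l (rho P M) + l (rho P N) = l (rho P U) + l (rho P V) := by
      rw [← map_add, hsum, map_add]
    have hMle : l (rho P M) ≤ l (rho P U) := hUF.2 _ hMS
    have hNle : l (rho P N) ≤ l (rho P U) := hUF.2 _ hNS
    have hMeq : l (rho P M) = l (rho P U) := by linarith
    have hNeq : l (rho P N) = l (rho P U) := by linarith
    have hMF : rho P M ∈ F := by
      rw [hl]; exact ⟨hMS, fun y hy => hMeq ▸ hUF.2 y hy⟩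
    have hNF : rho P N ∈ F := by
      rw [hl]; exact ⟨hNS, fun y hy => hNeq ▸ hUF.2 y hy⟩
    constructor
    · rcases zeroOne_convexHull_triple (zeroOne_cases (W := I)) (zeroOne_cases (W := J))
        (zeroOne_cases (W := K)) (zeroOne_cases (W := M)) hMF with he | he | he <;>
        [exact Or.inl (rho_inj he); exact Or.inr (Or.inl (rho_inj he));
         exact Or.inr (Or.inr (rho_inj he))]
    · rcases zeroOne_convexHull_triple (zeroOne_cases (W := I)) (zeroOne_cases (W := J))
        (zeroOne_cases (W := K)) (zeroOne_cases (W := N)) hNF with he | he | he <;>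
        [exact Or.inl (rho_inj he); exact Or.inr (Or.inl (rho_inj he));
         exact Or.inr (Or.inr (rho_inj he))]
  -- pairwise comparability
  have comp : ∀ U V T : Finset P, (U = I ∨ U = J ∨ U = K) → (V = I ∨ V = J ∨ V = K) →
      IsIdealF P U → IsIdealF P V → U ≠ T → (∀ W, (W = I ∨ W = J ∨ W = K) → W = U ∨ W = V ∨ W = T) →
      U ⊆ V ∨ V ⊆ U := by
    intro U V T hU hV hUi hVi hUT htri
    obtain ⟨hM, hN⟩ := work U V (U ∪ V) (U ∩ V) hU hV (union_ideal hUi hVi)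
      (inter_ideal hUi hVi) (rho_union_inter U V)
    rcases htri _ hM with h1 | h1 | h1
    · right; exact Finset.union_eq_left.mp h1
    · left; exact Finset.union_eq_right.mp h1
    · rcases htri _ hN with h2 | h2 | h2
      · left; exact Finset.inter_eq_left.mp h2
      · right; exact Finset.inter_eq_right.mp h2
      · exfalso
        apply hUT
        apply Finset.Subset.antisymm
        · exact h1 ▸ Finset.subset_union_left
        · exact h2 ▸ Finset.inter_subset_left
  have compIJ : I ⊆ J ∨ J ⊆ I := comp I J K (by tauto) (by tauto) hI hJ hIK (by tauto)
  have compIK : I ⊆ K ∨ K ⊆ I := comp I K J (by tauto) (by tauto) hI hK hIJ (by tauto)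
  have compJK : J ⊆ K ∨ K ⊆ J := comp J K I (by tauto) (by tauto) hJ hK (by tauto) (by tauto)
  -- main lemma for an ordered chain
  have main : ∀ X Y Z : Finset P, (X = I ∨ X = J ∨ X = K) → (Y = I ∨ Y = J ∨ Y = K) →
      (Z = I ∨ Z = J ∨ Z = K) → ({X, Y, Z} : Set (Finset P)) = {I, J, K} →
      X ≠ Y → Y ≠ Z → X ⊆ Y → Y ⊆ Z →
      ∃ I' J' K' : Finset P, ({I', J', K'} : Set (Finset P)) = {I, J, K} ∧
        I' ⊆ J' ∧ J' ⊆ K' ∧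
        ConnIn P (↑(J' \ I')) ∧ ConnIn P (↑(K' \ J')) ∧ ConnIn P (↑(K' \ I')) := by
    intro X Y Z hXm hYm hZm hset hXY hYZ hXYs hYZs
    have hXi : IsIdealF P X := by rcases hXm with rfl | rfl | rfl <;> assumption
    have hYi : IsIdealF P Y := by rcases hYm with rfl | rfl | rfl <;> assumption
    have hZi : IsIdealF P Z := by rcases hZm with rfl | rfl | rfl <;> assumption
    have hmem : ∀ W : Finset P, (W = I ∨ W = J ∨ W = K) → W = X ∨ W = Y ∨ W = Z := by
      intro W hW
      have : W ∈ ({X, Y, Z} : Set (Finset P)) := by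
        rw [hset]; rcases hW with rfl | rfl | rfl <;> simp
      simpa using this
    refine ⟨X, Y, Z, hset, hXYs, hYZs, ?_, ?_, ?_⟩
    · by_contra hnc
      obtain ⟨M, N, hMi, hNi, hsum, h1, h2, _, _, _⟩ := sandwich hXi hYi hXYs hXY hnc
      rcases hmem M (work X Y M N hXm hYm hMi hNi hsum).1 with rfl | rfl | rfl
      · exact h1.ne rfl
      · exact h2.ne rfl
      · exact (h2.trans_subset hYZs).ne rfl
    · by_contra hnc
      obtain ⟨M, N, hMi, hNi, hsum, h1, h2, _, _, _⟩ := sandwich hYi hZi hYZs hYZ hnc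
      rcases hmem M (work Y Z M N hYm hZm hMi hNi hsum).1 with rfl | rfl | rfl
      · exact (hXYs.trans_ssubset h1).ne rfl
      · exact h1.ne rfl
      · exact h2.ne rfl
    · by_contra hnc
      have hXZ : X ≠ Z := fun h => hXY (Finset.Subset.antisymm hXYs (h ▸ hYZs))
      obtain ⟨M, N, hMi, hNi, hsum, h1, h2, h3, h4, hMN⟩ :=
        sandwich hXi hZi (hXYs.trans hYZs) hXZ hnc
      have hMY : M = Y := by
        rcases hmem M (work X Z M N hXm hZm hMi hNi hsum).1 with rfl | rfl | rfl
        · exact absurd rfl h1.ne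
        · rfl
        · exact absurd rfl h2.ne
      have hNY : N = Y := by
        rcases hmem N (work X Z M N hXm hZm hMi hNi hsum).2 with rfl | rfl | rfl
        · exact absurd rfl h3.ne
        · rfl
        · exact absurd rfl h4.ne
      exact hMN (hMY.trans hNY.symm)
  -- case analysis on the chain order
  have triIJK : ({I, J, K} : Set (Finset P)) = {I, J, K} := rfl
  rcases compIJ with h1 | h1
  · rcases compJK with h2 | h2
    · exact main I J K (by tauto) (by tauto) (by tauto) rfl hIJ hJK h1 h2
    · rcases compIK with h3 | h3
      · exact main I K J (by tauto) (by tauto) (by tauto)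
          (by ext x; simp; tauto) hIK (Ne.symm hJK) h3 h2
      · exact main K I J (by tauto) (by tauto) (by tauto)
          (by ext x; simp; tauto) (Ne.symm hIK) hIJ h3 h1
  · rcases compIK with h3 | h3
    · exact main J I K (by tauto) (by tauto) (by tauto)
        (by ext x; simp; tauto) (Ne.symm hIJ) hIK h1 h3
    · rcases compJK with h2 | h2
      · exact main J K I (by tauto) (by tauto) (by tauto)
          (by ext x; simp; tauto) hJK (Ne.symm hIK) h2 h3
      · exact main K J I (by tauto) (by tauto) (by tauto)
          (by ext x; simp; tauto) (Ne.symm hJK) (Ne.symm hIJ) h2 h1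

lemma walk_cross {A B : Finset P} (hd : Disjoint A B) :
    ∀ {u v : (↑(A ∪ B) : Set P)}
      (_ : (SimpleGraph.induce (↑(A ∪ B) : Set P) (compGraph P)).Walk u v),
      (u : P) ∈ A → (v : P) ∈ B → ∃ x ∈ A, ∃ y ∈ B, (compGraph P).Adj x y := by
  intro u v p
  induction p with
  | nil => intro hu hv; exact absurd hu (Finset.disjoint_right.mp hd hv)
  | @cons c d e h p ih =>
      intro hu hv
      by_cases hdB : (d : P) ∈ B
      · exact ⟨c, hu, d, hdB, h⟩
      · have hdA : (d : P) ∈ A := by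
          have := d.2
          simp only [Finset.coe_union, Set.mem_union, Finset.mem_coe] at this
          tauto
        exact ih hdA hv

lemma cross_of_conn {A B : Finset P} (hd : Disjoint A B)
    (hconn : ConnIn P (↑(A ∪ B) : Set P)) {a b : P} (ha : a ∈ A) (hb : b ∈ B) :
    ∃ x ∈ A, ∃ y ∈ B, (compGraph P).Adj x y := by
  have haU : a ∈ (↑(A ∪ B) : Set P) := by simp [ha]
  have hbU : b ∈ (↑(A ∪ B) : Set P) := by simp [hb]
  obtain ⟨p⟩ := hconn.preconnected ⟨a, haU⟩ ⟨b, hbU⟩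
  exact walk_cross hd p ha hb

lemma backward_dir {I J K : Finset P} (hI : IsIdealF P I) (hJ : IsIdealF P J)
    (hK : IsIdealF P K) (hIJ : I ⊆ J) (hJK : J ⊆ K) (hIJne : I ≠ J) (hJKne : J ≠ K)
    (c1 : ConnIn P (↑(J \ I) : Set P)) (c2 : ConnIn P (↑(K \ J) : Set P))
    (c3 : ConnIn P (↑(K \ I) : Set P)) :
    IsExposed ℝ (orderPolytope P) (convexHull ℝ {rho P I, rho P J, rho P K}) := by
  classical
  intro _
  set A : Finset P := J \ I with hA
  set B : Finset P := K \ J with hB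
  set pa : Finset (P × P) := (A ×ˢ A).filter (fun p => p.1 < p.2) with hpa
  set pb : Finset (P × P) := (B ×ˢ B).filter (fun p => p.1 < p.2) with hpb
  set l : (P → ℝ) →L[ℝ] ℝ :=
    ((∑ x ∈ I, ContinuousLinearMap.proj x) - (∑ x ∈ univ \ K, ContinuousLinearMap.proj x))
    + ∑ p ∈ pa, ((ContinuousLinearMap.proj p.2 : (P → ℝ) →L[ℝ] ℝ)
        - (ContinuousLinearMap.proj p.1 : (P → ℝ) →L[ℝ] ℝ))
    + ∑ p ∈ pb, ((ContinuousLinearMap.proj p.2 : (P → ℝ) →L[ℝ] ℝ)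
        - (ContinuousLinearMap.proj p.1 : (P → ℝ) →L[ℝ] ℝ)) with hldef
  have happ : ∀ f : P → ℝ, l f = (∑ x ∈ I, f x) - (∑ x ∈ univ \ K, f x)
      + ∑ p ∈ pa, (f p.2 - f p.1) + ∑ p ∈ pb, (f p.2 - f p.1) := by
    intro f
    simp [hldef, ContinuousLinearMap.sum_apply, ContinuousLinearMap.sub_apply,
      ContinuousLinearMap.add_apply, ContinuousLinearMap.proj_apply]
  -- values at the three vertices
  have hpaJ : ∀ p ∈ pa, p.1 ∈ J \ I ∧ p.2 ∈ J \ I := by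
    intro p hp
    rw [hpa, Finset.mem_filter, Finset.mem_product] at hp
    exact ⟨hp.1.1, hp.1.2⟩
  have hpbK : ∀ p ∈ pb, p.1 ∈ K \ J ∧ p.2 ∈ K \ J := by
    intro p hp
    rw [hpb, Finset.mem_filter, Finset.mem_product] at hp
    exact ⟨hp.1.1, hp.1.2⟩
  have hval1 : ∀ W : Finset P, (∀ x ∈ I, x ∈ W) → ∑ x ∈ I, rho P W x = (I.card : ℝ) := by
    intro W hW
    rw [Finset.sum_congr rfl (fun x hx => by simp [rho, hW x hx] : ∀ x ∈ I, rho P W x = 1)]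
    simp
  have hval2 : ∀ W : Finset P, (∀ x, x ∉ K → x ∉ W) → ∑ x ∈ univ \ K, rho P W x = 0 := by
    intro W hW
    refine Finset.sum_eq_zero fun x hx => ?_
    rw [Finset.mem_sdiff] at hx
    simp [rho, hW x hx.2]
  have hval3 : ∀ (W : Finset P) (pc : Finset (P × P)),
      (∀ p ∈ pc, (p.1 ∈ W ↔ p.2 ∈ W)) → ∑ p ∈ pc, (rho P W p.2 - rho P W p.1) = 0 := by
    intro W pc hW
    refine Finset.sum_eq_zero fun p hp => ?_
    by_cases h1 : p.1 ∈ W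
    · have h2 : p.2 ∈ W := (hW p hp).mp h1
      simp [rho, h1, h2]
    · have h2 : p.2 ∉ W := fun h => h1 ((hW p hp).mpr h)
      simp [rho, h1, h2]
  have hval : l (rho P I) = I.card ∧ l (rho P J) = I.card ∧ l (rho P K) = I.card := by
    refine ⟨?_, ?_, ?_⟩ <;> rw [happ]
    · have pa0 : ∀ p ∈ pa, (p.1 ∈ I ↔ p.2 ∈ I) := by
        intro p hp
        obtain ⟨h1, h2⟩ := hpaJ p hp
        rw [Finset.mem_sdiff] at h1 h2
        exact iff_of_false h1.2 h2.2
      have pb0 : ∀ p ∈ pb, (p.1 ∈ I ↔ p.2 ∈ I) := by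
        intro p hp
        obtain ⟨h1, h2⟩ := hpbK p hp
        rw [Finset.mem_sdiff] at h1 h2
        exact iff_of_false (fun h => h1.2 (hIJ h)) (fun h => h2.2 (hIJ h))
      rw [hval1 I (fun x hx => hx), hval2 I (fun x hx h => hx (hJK (hIJ h))),
        hval3 I pa pa0, hval3 I pb pb0]
      ring
    · have pa0 : ∀ p ∈ pa, (p.1 ∈ J ↔ p.2 ∈ J) := by
        intro p hp
        obtain ⟨h1, h2⟩ := hpaJ p hp
        rw [Finset.mem_sdiff] at h1 h2
        exact iff_of_true h1.1 h2.1
      have pb0 : ∀ p ∈ pb, (p.1 ∈ J ↔ p.2 ∈ J) := by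
        intro p hp
        obtain ⟨h1, h2⟩ := hpbK p hp
        rw [Finset.mem_sdiff] at h1 h2
        exact iff_of_false h1.2 h2.2
      rw [hval1 J (fun x hx => hIJ hx), hval2 J (fun x hx h => hx (hJK h)),
        hval3 J pa pa0, hval3 J pb pb0]
      ring
    · have pa0 : ∀ p ∈ pa, (p.1 ∈ K ↔ p.2 ∈ K) := by
        intro p hp
        obtain ⟨h1, h2⟩ := hpaJ p hp
        rw [Finset.mem_sdiff] at h1 h2
        exact iff_of_true (hJK h1.1) (hJK h2.1)
      have pb0 : ∀ p ∈ pb, (p.1 ∈ K ↔ p.2 ∈ K) := by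
        intro p hp
        obtain ⟨h1, h2⟩ := hpbK p hp
        rw [Finset.mem_sdiff] at h1 h2
        exact iff_of_true h1.1 h2.1
      rw [hval1 K (fun x hx => hJK (hIJ hx)), hval2 K (fun x hx h => hx h),
        hval3 K pa pa0, hval3 K pb pb0]
      ring
  -- upper bound and slack decomposition
  have hslack : ∀ f : P → ℝ, (I.card : ℝ) - l f =
      (∑ x ∈ I, (1 - f x)) + (∑ x ∈ univ \ K, f x)
      + ∑ p ∈ pa, (f p.1 - f p.2) + ∑ p ∈ pb, (f p.1 - f p.2) := by
    intro f
    rw [happ]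
    simp only [Finset.sum_sub_distrib, Finset.sum_const, nsmul_eq_mul, mul_one]
    ring
  have hbound : ∀ f ∈ orderPolytope P, l f ≤ I.card := by
    intro f hf
    have h1 : 0 ≤ ∑ x ∈ I, (1 - f x) := Finset.sum_nonneg fun x _ => by linarith [(hf.1 x).2]
    have h2 : 0 ≤ ∑ x ∈ univ \ K, f x := Finset.sum_nonneg fun x _ => (hf.1 x).1
    have h3 : 0 ≤ ∑ p ∈ pa, (f p.1 - f p.2) := Finset.sum_nonneg fun p hp => by
      rw [hpa, Finset.mem_filter] at hp
      linarith [hf.2 hp.2.le]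
    have h4 : 0 ≤ ∑ p ∈ pb, (f p.1 - f p.2) := Finset.sum_nonneg fun p hp => by
      rw [hpb, Finset.mem_filter] at hp
      linarith [hf.2 hp.2.le]
    have := hslack f
    linarith
  refine ⟨l, Set.Subset.antisymm ?_ ?_⟩
  · -- convexHull ⊆ exposed set
    intro f hf
    have hsub : ({rho P I, rho P J, rho P K} : Set (P → ℝ)) ⊆ orderPolytope P := by
      intro g hg
      rcases hg with rfl | rfl | rfl
      exacts [rho_mem_orderPolytope hI, rho_mem_orderPolytope hJ, rho_mem_orderPolytope hK]
    have hfS : f ∈ orderPolytope P :=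
      convexHull_min hsub convex_orderPolytope hf
    have hlf : l f = I.card := by
      have hconv : Convex ℝ {x : P → ℝ | l x = (I.card : ℝ)} :=
        convex_hyperplane (IsLinearMap.mk l.map_add l.map_smul) _
      have : convexHull ℝ ({rho P I, rho P J, rho P K} : Set (P → ℝ)) ⊆
          {x : P → ℝ | l x = (I.card : ℝ)} := by
        apply convexHull_min _ hconv
        intro g hg
        rcases hg with rfl | rfl | rfl
        exacts [hval.1, hval.2.1, hval.2.2]
      exact this hf
    exact ⟨hfS, fun y hy => by rw [hlf]; exact hbound y hy⟩
  · -- exposed set ⊆ convexHull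
    rintro f ⟨hfS, hfmax⟩
    have hlf : l f = I.card := by
      have h1 : (I.card : ℝ) ≤ l f := by
        have := hfmax _ (rho_mem_orderPolytope hI)
        rw [hval.1] at this
        exact this
      linarith [hbound f hfS]
    have hzero : (∑ x ∈ I, (1 - f x)) + (∑ x ∈ univ \ K, f x)
        + ∑ p ∈ pa, (f p.1 - f p.2) + ∑ p ∈ pb, (f p.1 - f p.2) = 0 := by
      have := hslack f
      rw [hlf] at this
      linarith
    have t1 : 0 ≤ ∑ x ∈ I, (1 - f x) := Finset.sum_nonneg fun x _ => by linarith [(hfS.1 x).2]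
    have t2 : 0 ≤ ∑ x ∈ univ \ K, f x := Finset.sum_nonneg fun x _ => (hfS.1 x).1
    have t3 : 0 ≤ ∑ p ∈ pa, (f p.1 - f p.2) := Finset.sum_nonneg fun p hp => by
      rw [hpa, Finset.mem_filter] at hp
      linarith [hfS.2 hp.2.le]
    have t4 : 0 ≤ ∑ p ∈ pb, (f p.1 - f p.2) := Finset.sum_nonneg fun p hp => by
      rw [hpb, Finset.mem_filter] at hp
      linarith [hfS.2 hp.2.le]
    have z1 : ∀ x ∈ I, f x = 1 := by
      have : ∑ x ∈ I, (1 - f x) = 0 := by linarith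
      have := (Finset.sum_eq_zero_iff_of_nonneg
        (fun x _ => by linarith [(hfS.1 x).2] : ∀ x ∈ I, (0:ℝ) ≤ 1 - f x)).mp this
      intro x hx
      linarith [this x hx]
    have z2 : ∀ x, x ∉ K → f x = 0 := by
      have hs : ∑ x ∈ univ \ K, f x = 0 := by linarith
      have := (Finset.sum_eq_zero_iff_of_nonneg
        (fun x _ => (hfS.1 x).1 : ∀ x ∈ univ \ K, (0:ℝ) ≤ f x)).mp hs
      intro x hx
      exact this x (Finset.mem_sdiff.mpr ⟨Finset.mem_univ x, hx⟩)
    have z3 : ∀ p ∈ pa, f p.1 = f p.2 := by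
      have hs : ∑ p ∈ pa, (f p.1 - f p.2) = 0 := by linarith
      have := (Finset.sum_eq_zero_iff_of_nonneg
        (fun p hp => by
          rw [hpa, Finset.mem_filter] at hp
          linarith [hfS.2 hp.2.le] : ∀ p ∈ pa, (0:ℝ) ≤ f p.1 - f p.2)).mp hs
      intro p hp
      linarith [this p hp]
    have z4 : ∀ p ∈ pb, f p.1 = f p.2 := by
      have hs : ∑ p ∈ pb, (f p.1 - f p.2) = 0 := by linarith
      have := (Finset.sum_eq_zero_iff_of_nonneg
        (fun p hp => by
          rw [hpb, Finset.mem_filter] at hp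
          linarith [hfS.2 hp.2.le] : ∀ p ∈ pb, (0:ℝ) ≤ f p.1 - f p.2)).mp hs
      intro p hp
      linarith [this p hp]
    -- constancy on A and on B
    have constA : ∀ x ∈ A, ∀ y ∈ A, f x = f y := by
      have key : ∀ x ∈ (↑A : Set P), ∀ y ∈ (↑A : Set P), (compGraph P).Adj x y → f x = f y := by
        intro x hx y hy hadj
        obtain ⟨hne, hcomp⟩ := hadj
        have hx' : x ∈ A := by exact_mod_cast hx
        have hy' : y ∈ A := by exact_mod_cast hy
        rcases hcomp with hle | hle
        · have hlt : x < y := lt_of_le_of_ne hle hne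
          exact z3 (x, y) (by rw [hpa, Finset.mem_filter, Finset.mem_product]; exact ⟨⟨hx', hy'⟩, hlt⟩)
        · have hlt : y < x := lt_of_le_of_ne hle (Ne.symm hne)
          exact (z3 (y, x) (by rw [hpa, Finset.mem_filter, Finset.mem_product]; exact ⟨⟨hy', hx'⟩, hlt⟩)).symm
      intro x hx y hy
      exact const_of_connIn c1 f key x (by exact_mod_cast hx) y (by exact_mod_cast hy)
    have constB : ∀ x ∈ B, ∀ y ∈ B, f x = f y := by
      have key : ∀ x ∈ (↑B : Set P), ∀ y ∈ (↑B : Set P), (compGraph P).Adj x y → f x = f y := by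
        intro x hx y hy hadj
        obtain ⟨hne, hcomp⟩ := hadj
        have hx' : x ∈ B := by exact_mod_cast hx
        have hy' : y ∈ B := by exact_mod_cast hy
        rcases hcomp with hle | hle
        · have hlt : x < y := lt_of_le_of_ne hle hne
          exact z4 (x, y) (by rw [hpb, Finset.mem_filter, Finset.mem_product]; exact ⟨⟨hx', hy'⟩, hlt⟩)
        · have hlt : y < x := lt_of_le_of_ne hle (Ne.symm hne)
          exact (z4 (y, x) (by rw [hpb, Finset.mem_filter, Finset.mem_product]; exact ⟨⟨hy', hx'⟩, hlt⟩)).symm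
      intro x hx y hy
      exact const_of_connIn c2 f key x (by exact_mod_cast hx) y (by exact_mod_cast hy)
    -- pick base points
    have hAne : A.Nonempty := by
      rw [hA, Finset.sdiff_nonempty]
      exact fun h => hIJne (Finset.Subset.antisymm hIJ h)
    have hBne : B.Nonempty := by
      rw [hB, Finset.sdiff_nonempty]
      exact fun h => hJKne (Finset.Subset.antisymm hJK h)
    obtain ⟨a₀, ha₀⟩ := hAne
    obtain ⟨b₀, hb₀⟩ := hBne
    set s : ℝ := f a₀ with hs
    set t : ℝ := f b₀ with ht
    have hs1 : s ≤ 1 := (hfS.1 a₀).2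
    have ht0 : 0 ≤ t := (hfS.1 b₀).1
    -- t ≤ s via a crossing edge in K \ I
    have hdisjAB : Disjoint A B := by
      rw [hA, hB, Finset.disjoint_left]
      intro x hx hx'
      rw [Finset.mem_sdiff] at hx hx'
      exact hx'.2 hx.1
    have hABunion : A ∪ B = K \ I := by
      rw [hA, hB]
      ext x
      simp only [Finset.mem_union, Finset.mem_sdiff]
      constructor
      · rintro (⟨h1, h2⟩ | ⟨h1, h2⟩)
        · exact ⟨hJK h1, h2⟩
        · exact ⟨h1, fun h => h2 (hIJ h)⟩
      · rintro ⟨h1, h2⟩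
        by_cases hxJ : x ∈ J
        · exact Or.inl ⟨hxJ, h2⟩
        · exact Or.inr ⟨h1, hxJ⟩
    have hts : t ≤ s := by
      obtain ⟨x, hx, y, hy, hne, hcomp⟩ := cross_of_conn hdisjAB (hABunion ▸ c3) ha₀ hb₀
      have hxy : x ≤ y := by
        rcases hcomp with h | h
        · exact h
        · exfalso
          rw [hA, Finset.mem_sdiff] at hx
          rw [hB, Finset.mem_sdiff] at hy
          exact hy.2 (hJ hx.1 h)
      have := hfS.2 hxy
      rw [constA x hx a₀ ha₀, constB y hy b₀ hb₀] at this
      exact this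
    -- f is the explicit convex combination
    have hfval : ∀ x, f x = (1 - s) * rho P I x + (s - t) * rho P J x + t * rho P K x := by
      intro x
      by_cases hxI : x ∈ I
      · have h1 := z1 x hxI
        simp only [rho, hxI, hIJ hxI, hJK (hIJ hxI), if_true]
        linarith [h1]
      · by_cases hxJ : x ∈ J
        · have hxA : x ∈ A := by rw [hA, Finset.mem_sdiff]; exact ⟨hxJ, hxI⟩
          have hcc := constA x hxA a₀ ha₀
          simp only [rho, hxI, hxJ, hJK hxJ, if_true, if_false]
          linarith [hcc, hs]
        · by_cases hxK : x ∈ K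
          · have hxB : x ∈ B := by rw [hB, Finset.mem_sdiff]; exact ⟨hxK, hxJ⟩
            have hcc := constB x hxB b₀ hb₀
            simp only [rho, hxI, hxJ, hxK, if_true, if_false]
            linarith [hcc, ht]
          · have h0 := z2 x hxK
            simp only [rho, hxI, hxJ, hxK, if_false]
            linarith [h0]
    -- conclude membership in the convex hull
    have hcomb : f = Finset.univ.centerMass ![1 - s, s - t, t]
        ![rho P I, rho P J, rho P K] := by
      rw [Finset.centerMass]
      rw [show ∑ i : Fin 3, ![1 - s, s - t, t] i = 1 by
        simp [Fin.sum_univ_three]]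
      funext x
      simp only [Fin.sum_univ_three, Matrix.cons_val_zero, Matrix.cons_val_one,
        Matrix.head_cons, inv_one, one_smul, Pi.add_apply, Pi.smul_apply, smul_eq_mul,
        Matrix.cons_val_two, Matrix.tail_cons]
      rw [hfval x]
      ring
    rw [hcomb]
    apply Finset.centerMass_mem_convexHull
    · intro i _
      fin_cases i <;> simp <;> linarith
    · rw [show ∑ i : Fin 3, ![1 - s, s - t, t] i = 1 by simp [Fin.sum_univ_three]]
      norm_num
    · intro i _
      fin_cases i <;> simp

lemma pigeon3 {α : Type*} (X Y Z W1 W2 : α) (h1 : X = W1 ∨ X = W2) (h2 : Y = W1 ∨ Y = W2)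
    (h3 : Z = W1 ∨ Z = W2) (hXY : X ≠ Y) (hXZ : X ≠ Z) (hYZ : Y ≠ Z) : False := by
  rcases h1 with rfl | rfl <;> rcases h2 with rfl | rfl <;> rcases h3 with rfl | rfl <;> tauto

end AuxLemmas

/-- For pairwise distinct poset ideals `I`, `J`, `K`,
`conv {ρ I, ρ J, ρ K}` is a triangular 2-face of the order polytope iff the three
ideals can be labeled `I' ⊆ J' ⊆ K'` with `J' \ I'`, `K' \ J'`, `K' \ I'` connected. -/
theorem triFace_orderPolytope_iff
    (I J K : Finset P) (hI : IsIdealF P I) (hJ : IsIdealF P J) (hK : IsIdealF P K)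
    (hIJ : I ≠ J) (hIK : I ≠ K) (hJK : J ≠ K) :
    IsTriFaceOf P (orderPolytope P) (rho P I) (rho P J) (rho P K) ↔
      ∃ I' J' K' : Finset P, ({I', J', K'} : Set (Finset P)) = {I, J, K} ∧
        I' ⊆ J' ∧ J' ⊆ K' ∧
        ConnIn P (↑(J' \ I')) ∧ ConnIn P (↑(K' \ J')) ∧ ConnIn P (↑(K' \ I')) := by
  constructor
  · exact forward_dir hI hJ hK hIJ hIK hJK
  · rintro ⟨I', J', K', hset, h1, h2, c1, c2, c3⟩
    have mI : I = I' ∨ I = J' ∨ I = K' := by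
      have : I ∈ ({I', J', K'} : Set (Finset P)) := by rw [hset]; simp
      simpa using this
    have mJ : J = I' ∨ J = J' ∨ J = K' := by
      have : J ∈ ({I', J', K'} : Set (Finset P)) := by rw [hset]; simp
      simpa using this
    have mK : K = I' ∨ K = J' ∨ K = K' := by
      have : K ∈ ({I', J', K'} : Set (Finset P)) := by rw [hset]; simp
      simpa using this
    have mI' : I' = I ∨ I' = J ∨ I' = K := by
      have : I' ∈ ({I, J, K} : Set (Finset P)) := by rw [← hset]; simp
      simpa using this
    have mJ' : J' = I ∨ J' = J ∨ J' = K := by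
      have : J' ∈ ({I, J, K} : Set (Finset P)) := by rw [← hset]; simp
      simpa using this
    have mK' : K' = I ∨ K' = J ∨ K' = K := by
      have : K' ∈ ({I, J, K} : Set (Finset P)) := by rw [← hset]; simp
      simpa using this
    have hI'i : IsIdealF P I' := by rcases mI' with rfl | rfl | rfl <;> assumption
    have hJ'i : IsIdealF P J' := by rcases mJ' with rfl | rfl | rfl <;> assumption
    have hK'i : IsIdealF P K' := by rcases mK' with rfl | rfl | rfl <;> assumption
    have hI'J' : I' ≠ J' := by
      intro h
      refine pigeon3 I J K J' K' ?_ ?_ ?_ hIJ hIK hJK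
      · rcases mI with m | m | m
        exacts [Or.inl (m.trans h), Or.inl m, Or.inr m]
      · rcases mJ with m | m | m
        exacts [Or.inl (m.trans h), Or.inl m, Or.inr m]
      · rcases mK with m | m | m
        exacts [Or.inl (m.trans h), Or.inl m, Or.inr m]
    have hJ'K' : J' ≠ K' := by
      intro h
      refine pigeon3 I J K I' K' ?_ ?_ ?_ hIJ hIK hJK
      · rcases mI with m | m | m
        exacts [Or.inl m, Or.inr (m.trans h), Or.inr m]
      · rcases mJ with m | m | m
        exacts [Or.inl m, Or.inr (m.trans h), Or.inr m]
      · rcases mK with m | m | m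
        exacts [Or.inl m, Or.inr (m.trans h), Or.inr m]
    have hexp := backward_dir hI'i hJ'i hK'i h1 h2 hI'J' hJ'K' c1 c2 c3
    have hsetr : ({rho P I', rho P J', rho P K'} : Set (P → ℝ)) =
        {rho P I, rho P J, rho P K} := by
      have := congrArg (Set.image (rho P)) hset
      simpa [Set.image_insert_eq] using this
    rw [hsetr] at hexp
    exact ⟨fun h => hIJ (rho_inj h), fun h => hIK (rho_inj h), fun h => hJK (rho_inj h), hexp⟩
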